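/- arXiv:math/0010090 — 2 statements merged into one kernel-verified Lean document; each statement's English description precedes it below -/
import Mathlib

section
/- Let ∇ = (H^1_{11}, G^k_{i1}, L^k_{ij}, C^{k(1)}_{i(j)}) be an h-normal Γ-linear connection on J^1(R,M). Then its curvature d-tensor R is determined by exactly five effective families of local d-curvatures: R^l_{i1k} = δG^l_{i1}/δx^k − δL^l_{ik}/δt + G^m_{i1}L^l_{mk} − L^m_{ik}G^l_{m1} + C^{l(1)}_{i(m)}R^{(m)}_{(1)1k}; R^l_{ijk} = δL^l_{ij}/δx^k − δL^l_{ik}/δx^j + L^m_{ij}L^l_{mk} − L^m_{ik}L^l_{mj} + C^{l(1)}_{i(m)}R^{(m)}_{(1)jk}; P^{l(1)}_{i1(k)} = ∂G^l_{i1}/∂y^k − C^{l(1)}_{i(k)/1} + C^{l(1)}_{i(m)}P^{(m)(1)}_{(1)1(k)}; P^{l(1)}_{ij(k)} = ∂L^l_{ij}/∂y^k − C^{l(1)}_{i(k)|j} + C^{l(1)}_{i(m)}P^{(m)(1)}_{(1)j(k)}; S^{l(1)(1)}_{i(j)(k)} = ∂C^{l(1)}_{i(j)}/∂y^k − ∂C^{l(1)}_{i(k)}/∂y^j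 + C^{m(1)}_{i(j)}C^{l(1)}_{m(k)} − C^{m(1)}_{i(k)}C^{l(1)}_{m(j)}; moreover the remaining vertical adapted curvature components coincide with these (R^{(l)(1)}_{(1)(i)1k} = R^l_{i1k}, R^{(l)(1)}_{(1)(i)jk} = R^l_{ijk}, P^{(l)(1)(1)}_{(1)(i)1(k)} = P^{l(1)}_{i1(k)}, P^{(l)(1)(1)}_{(1)(i)j(k)} = P^{l(1)}_{ij(k)}, S^{(l)(1)(1)(1)}_{(1)(i)(j)(k)} = S^{l(1)(1)}_{i(j)(k)}), and all components with a temporal upper index vanish. -/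
noncomputable section

open scoped BigOperators

/-- Local spatial coordinates (fibre ℝⁿ). -/
abbrev Vec (n : ℕ) : Type := Fin n → ℝ

/-- Local coordinates `(t, xⁱ, yⁱ)` on the 1-jet bundle `J¹(ℝ, M)`. -/
abbrev J1 (n : ℕ) : Type := ℝ × Vec n × Vec n

namespace Jet

variable {n : ℕ}

/-- Partial derivative in the temporal variable `t`. -/
def pt (f : J1 n → ℝ) (p : J1 n) : ℝ := deriv (fun s => f (s, p.2)) p.1

/-- Partial derivative in the spatial variable `x^j`. -/
def px (f : J1 n → ℝ) (j : Fin n) (p : J1 n) : ℝ :=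
  deriv (fun s => f (p.1, Function.update p.2.1 j s, p.2.2)) (p.2.1 j)

/-- Partial derivative in the fibre variable `y^j`. -/
def py (f : J1 n → ℝ) (j : Fin n) (p : J1 n) : ℝ :=
  deriv (fun s => f (p.1, p.2.1, Function.update p.2.2 j s)) (p.2.2 j)

/-- Partial derivative of a function of the spatial variables only. -/
def pX (f : Vec n → ℝ) (j : Fin n) (x : Vec n) : ℝ :=
  deriv (fun s => f (Function.update x j s)) (x j)

/-- A change of coordinates `t̃ = t̃(t)`, `x̃ⁱ = x̃ⁱ(xʲ)` on the base `ℝ × M`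
(a gauge transformation of the bundle of configurations). -/
structure CoordChange (n : ℕ) where
  τ : ℝ → ℝ
  τinv : ℝ → ℝ
  σ : Vec n → Vec n
  σinv : Vec n → Vec n
  left_τ : Function.LeftInverse τinv τ
  right_τ : Function.RightInverse τinv τ
  left_σ : Function.LeftInverse σinv σ
  right_σ : Function.RightInverse σinv σ
  smooth_τ : ContDiff ℝ (⊤ : ℕ∞) τ
  smooth_τinv : ContDiff ℝ (⊤ : ℕ∞) τinv
  smooth_σ : ContDiff ℝ (⊤ : ℕ∞) σ
  smooth_σinv : ContDiff ℝ (⊤ : ℕ∞) σinv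

namespace CoordChange

variable (c : CoordChange n)

/-- `dt̃/dt`. -/
def dτ (t : ℝ) : ℝ := deriv c.τ t

/-- `dt/dt̃`, evaluated at `t̃ = τ t`. -/
def dτinv (t : ℝ) : ℝ := deriv c.τinv (c.τ t)

/-- The Jacobian `∂x̃^k/∂x^j`. -/
def Jac (k j : Fin n) (x : Vec n) : ℝ := pX (fun z => c.σ z k) j x

/-- The inverse Jacobian `∂x^i/∂x̃^j`, evaluated at `x̃ = σ x`. -/
def JacInv (i j : Fin n) (x : Vec n) : ℝ := pX (fun z => c.σinv z i) j (c.σ x)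

/-- The induced change of the fibre coordinates:
`ỹⁱ = (∂x̃ⁱ/∂xʲ)(dt/dt̃) yʲ`. -/
def yc (p : J1 n) : Vec n := fun i => (∑ j, c.Jac i j p.2.1 * p.2.2 j) * c.dτinv p.1

/-- The induced change of coordinates on `J¹(ℝ,M)`. -/
def Φ (p : J1 n) : J1 n := (c.τ p.1, c.σ p.2.1, c.yc p)

end CoordChange

/-- The transformation law of the local components of a temporal spray:
`2H̃⁽ᵏ⁾ = 2H⁽ʲ⁾ (dt/dt̃)² (∂x̃ᵏ/∂xʲ) − (dt/dt̃)(∂ỹᵏ/∂t)`. -/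
def TemporalSprayLaw (c : CoordChange n) (H H' : J1 n → Fin n → ℝ) : Prop :=
  ∀ (p : J1 n) (k : Fin n),
    2 * H' (c.Φ p) k =
      (∑ j, 2 * H p j * (c.dτinv p.1) ^ 2 * c.Jac k j p.2.1) -
        c.dτinv p.1 * pt (fun q => c.yc q k) p

/-- The transformation law of the local components of a spatial spray:
`2G̃⁽ᵏ⁾ = 2G⁽ʲ⁾ (dt/dt̃)² (∂x̃ᵏ/∂xʲ) − (∂xⁱ/∂x̃ʲ)(∂ỹᵏ/∂xⁱ) ỹʲ`. -/
def SpatialSprayLaw (c : CoordChange n) (G G' : J1 n → Fin n → ℝ) : Prop :=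
  ∀ (p : J1 n) (k : Fin n),
    2 * G' (c.Φ p) k =
      (∑ j, 2 * G p j * (c.dτinv p.1) ^ 2 * c.Jac k j p.2.1) -
        ∑ j, ∑ i, c.JacInv i j p.2.1 * px (fun q => c.yc q k) i p * c.yc p j

/-- The transformation law of a temporal nonlinear connection:
`M̃⁽ʲ⁾(dt̃/dt) = M⁽ᵏ⁾(dt/dt̃)(∂x̃ʲ/∂xᵏ) − ∂ỹʲ/∂t`. -/
def TemporalNLCLaw (c : CoordChange n) (M M' : J1 n → Fin n → ℝ) : Prop :=
  ∀ (p : J1 n) (j : Fin n),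
    M' (c.Φ p) j * c.dτ p.1 =
      (∑ k, M p k * c.dτinv p.1 * c.Jac j k p.2.1) - pt (fun q => c.yc q j) p

/-- The transformation law of a spatial nonlinear connection:
`Ñ⁽ʲ⁾₍ₖ₎(∂x̃ᵏ/∂xⁱ) = N⁽ᵏ⁾₍ᵢ₎(dt/dt̃)(∂x̃ʲ/∂xᵏ) − ∂ỹʲ/∂xⁱ`. -/
def SpatialNLCLaw (c : CoordChange n) (N N' : J1 n → Fin n → Fin n → ℝ) : Prop :=
  ∀ (p : J1 n) (j i : Fin n),
    (∑ k, N' (c.Φ p) j k * c.Jac k i p.2.1) =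
      (∑ k, N p k i * c.dτinv p.1 * c.Jac j k p.2.1) - px (fun q => c.yc q j) i p

/-- Transformation law of a (semi-Riemannian) temporal metric `h₁₁(t)`. -/
def TemporalMetricLaw (c : CoordChange n) (h h' : ℝ → ℝ) : Prop :=
  ∀ t : ℝ, h' (c.τ t) = h t * (c.dτinv t) ^ 2

/-- Transformation law of a (semi-Riemannian) spatial metric `φᵢⱼ(x)`. -/
def SpatialMetricLaw (c : CoordChange n) (φ φ' : Vec n → Matrix (Fin n) (Fin n) ℝ) : Prop :=
  ∀ (x : Vec n) (i j : Fin n),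
    φ' (c.σ x) i j = ∑ k, ∑ l, φ x k l * c.JacInv k i x * c.JacInv l j x

/-- The Christoffel symbol `H¹₁₁ = (h¹¹/2) dh₁₁/dt` of a temporal metric. -/
def christoffelT (h : ℝ → ℝ) (t : ℝ) : ℝ := deriv h t / (2 * h t)

/-- The Christoffel symbols `γⁱⱼₖ` of a spatial metric `φ`. -/
def christoffelS (φ : Vec n → Matrix (Fin n) (Fin n) ℝ) (i j k : Fin n) (x : Vec n) : ℝ :=
  (1 / 2) * ∑ m, (φ x)⁻¹ i m *
    (pX (fun z => φ z m j) k x + pX (fun z => φ z m k) j x - pX (fun z => φ z j k) m x)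

/-- The adapted temporal derivative `δf/δt = ∂f/∂t − M⁽ʲ⁾₍₁₎₁ ∂f/∂yʲ`. -/
def deltaT {n : ℕ} (M : J1 n → Fin n → ℝ) (f : J1 n → ℝ) (p : J1 n) : ℝ :=
  pt f p - ∑ j, M p j * py f j p

/-- The adapted spatial derivative `δf/δxᵏ = ∂f/∂xᵏ − N⁽ʲ⁾₍₁₎ₖ ∂f/∂yʲ`. -/
def deltaX {n : ℕ} (N : J1 n → Fin n → Fin n → ℝ) (f : J1 n → ℝ) (k : Fin n)
    (p : J1 n) : ℝ :=
  px f k p - ∑ j, N p j k * py f j p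

/-- The nine local coefficient families of a `Γ`-linear connection `∇` on `J¹(ℝ,M)`:
`∇Γ = (Ḡ¹₁₁, Gᵏᵢ₁, G⁽ᵏ⁾⁽¹⁾₍₁₎₍ᵢ₎₁, L̄¹₁ⱼ, Lᵏᵢⱼ, L⁽ᵏ⁾⁽¹⁾₍₁₎₍ᵢ₎ⱼ, C̄¹⁽¹⁾₁₍ⱼ₎, Cᵏ⁽¹⁾ᵢ₍ⱼ₎,
C⁽ᵏ⁾⁽¹⁾⁽¹⁾₍₁₎₍ᵢ₎₍ⱼ₎)`. -/
structure GammaCoeffs (n : ℕ) where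
  Gbar : J1 n → ℝ
  Gc : J1 n → Fin n → Fin n → ℝ
  Gv : J1 n → Fin n → Fin n → ℝ
  Lbar : J1 n → Fin n → ℝ
  Lc : J1 n → Fin n → Fin n → Fin n → ℝ
  Lv : J1 n → Fin n → Fin n → Fin n → ℝ
  Cbar : J1 n → Fin n → ℝ
  Cc : J1 n → Fin n → Fin n → Fin n → ℝ
  Cv : J1 n → Fin n → Fin n → Fin n → ℝ

/-- The covariant derivative `∇_{δ/δt} W` of a vector field `W`, written in adapted
components, of a `Γ`-linear connection with coefficients `Γ`. -/
def covT {n : ℕ} (M : J1 n → Fin n → ℝ) (Γ : GammaCoeffs n) (W : J1 n → J1 n)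
    (p : J1 n) : J1 n :=
  (deltaT M (fun q => (W q).1) p + (W p).1 * Γ.Gbar p,
   fun k => deltaT M (fun q => (W q).2.1 k) p + ∑ i, (W p).2.1 i * Γ.Gc p k i,
   fun k => deltaT M (fun q => (W q).2.2 k) p + ∑ i, (W p).2.2 i * Γ.Gv p k i)

/-- `∇_{δ/δxʲ} W` in adapted components. -/
def covX {n : ℕ} (N : J1 n → Fin n → Fin n → ℝ) (Γ : GammaCoeffs n) (W : J1 n → J1 n)
    (j : Fin n) (p : J1 n) : J1 n :=
  (deltaX N (fun q => (W q).1) j p + (W p).1 * Γ.Lbar p j,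
   fun k => deltaX N (fun q => (W q).2.1 k) j p + ∑ i, (W p).2.1 i * Γ.Lc p k i j,
   fun k => deltaX N (fun q => (W q).2.2 k) j p + ∑ i, (W p).2.2 i * Γ.Lv p k i j)

/-- `∇_{∂/∂yʲ} W` in adapted components. -/
def covY {n : ℕ} (Γ : GammaCoeffs n) (W : J1 n → J1 n) (j : Fin n) (p : J1 n) : J1 n :=
  (py (fun q => (W q).1) j p + (W p).1 * Γ.Cbar p j,
   fun k => py (fun q => (W q).2.1 k) j p + ∑ i, (W p).2.1 i * Γ.Cc p k i j,
   fun k => py (fun q => (W q).2.2 k) j p + ∑ i, (W p).2.2 i * Γ.Cv p k i j)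

/-- The coefficients of an `h`-normal `Γ`-linear connection, determined by the four
families `(H¹₁₁, Gᵏᵢ₁, Lᵏᵢⱼ, Cᵏ⁽¹⁾ᵢ₍ⱼ₎)`. -/
def hNormalCoeffs {n : ℕ} (h : ℝ → ℝ) (Gc : J1 n → Fin n → Fin n → ℝ)
    (Lc Cc : J1 n → Fin n → Fin n → Fin n → ℝ) : GammaCoeffs n where
  Gbar := fun p => christoffelT h p.1
  Gc := Gc
  Gv := fun p k i => Gc p k i - (if k = i then christoffelT h p.1 else 0)
  Lbar := fun _ _ => 0
  Lc := Lc
  Lv := Lc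
  Cbar := fun _ _ => 0
  Cc := Cc
  Cv := Cc

/-- Natural components of a vector field given in adapted components. -/
def natOfAd {n : ℕ} (M : J1 n → Fin n → ℝ) (N : J1 n → Fin n → Fin n → ℝ)
    (p : J1 n) (w : J1 n) : J1 n :=
  (w.1, w.2.1, fun j => w.2.2 j - w.1 * M p j - ∑ i, N p j i * w.2.1 i)

/-- Adapted components of a vector field given in natural components. -/
def adOfNat {n : ℕ} (M : J1 n → Fin n → ℝ) (N : J1 n → Fin n → Fin n → ℝ)
    (p : J1 n) (w : J1 n) : J1 n :=
  (w.1, w.2.1, fun j => w.2.2 j + w.1 * M p j + ∑ i, N p j i * w.2.1 i)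

/-- Lie bracket of two vector fields, written in natural components. -/
def bracket {n : ℕ} (X Y : J1 n → J1 n) (p : J1 n) : J1 n :=
  fderiv ℝ Y p (X p) - fderiv ℝ X p (Y p)

/-- `δ/δt` as a vector field in natural components. -/
def frameT {n : ℕ} (M : J1 n → Fin n → ℝ) (p : J1 n) : J1 n :=
  ((1 : ℝ), (0 : Vec n), fun j => -(M p j))

/-- `δ/δxⁱ` as a vector field in natural components. -/
def frameX {n : ℕ} (N : J1 n → Fin n → Fin n → ℝ) (i : Fin n) (p : J1 n) : J1 n :=
  ((0 : ℝ), (Pi.single i 1 : Vec n), fun j => -(N p j i))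

/-- `∂/∂yⁱ` as a vector field in natural components. -/
def frameY {n : ℕ} (i : Fin n) (_p : J1 n) : J1 n :=
  ((0 : ℝ), (0 : Vec n), (Pi.single i 1 : Vec n))

/-- Covariant derivative in the direction of an arbitrary tangent vector `d`
(in adapted components), by `C^∞`-linearity. -/
def covDir {n : ℕ} (M : J1 n → Fin n → ℝ) (N : J1 n → Fin n → Fin n → ℝ)
    (Γ : GammaCoeffs n) (d : J1 n) (W : J1 n → J1 n) (p : J1 n) : J1 n :=
  d.1 • covT M Γ W p + (∑ i, d.2.1 i • covX N Γ W i p) + ∑ i, d.2.2 i • covY Γ W i p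

/-- The adapted components of the curvature `R(X,Y)Z = ∇_X∇_Y Z − ∇_Y∇_X Z − ∇_{[X,Y]}Z`
applied to a constant adapted frame field `Z`, for adapted frame directions `X`, `Y` given
by the covariant derivative operators `DX`, `DY` and natural frame fields `nX`, `nY`. -/
def curvature {n : ℕ} (M : J1 n → Fin n → ℝ) (N : J1 n → Fin n → Fin n → ℝ)
    (Γ : GammaCoeffs n) (DX DY : (J1 n → J1 n) → J1 n → J1 n) (nX nY : J1 n → J1 n)
    (Z : J1 n) (p : J1 n) : J1 n :=
  DX (fun q => DY (fun _ => Z) q) p - DY (fun q => DX (fun _ => Z) q) p -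
    covDir M N Γ (adOfNat M N p (bracket nX nY p)) (fun _ => Z) p

section CurvatureFormulas

variable {n : ℕ}

/-- The torsion d-tensor `R⁽ᵐ⁾₍₁₎₁ₖ = δM⁽ᵐ⁾₍₁₎₁/δxᵏ − δN⁽ᵐ⁾₍₁₎ₖ/δt`. -/
def R01 (M : J1 n → Fin n → ℝ) (N : J1 n → Fin n → Fin n → ℝ)
    (m k : Fin n) (p : J1 n) : ℝ :=
  deltaX N (fun q => M q m) k p - deltaT M (fun q => N q m k) p

/-- The torsion d-tensor `R⁽ᵐ⁾₍₁₎ⱼₖ = δN⁽ᵐ⁾₍₁₎ⱼ/δxᵏ − δN⁽ᵐ⁾₍₁₎ₖ/δxʲ`. -/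
def R0S (N : J1 n → Fin n → Fin n → ℝ) (m j k : Fin n) (p : J1 n) : ℝ :=
  deltaX N (fun q => N q m j) k p - deltaX N (fun q => N q m k) j p

/-- The torsion d-tensor `P⁽ᵐ⁾⁽¹⁾₍₁₎₁₍ₖ₎ = ∂M⁽ᵐ⁾₍₁₎₁/∂yᵏ − Gᵐₖ₁ + δᵐₖH¹₁₁`. -/
def P01 (h : ℝ → ℝ) (M : J1 n → Fin n → ℝ) (Gc : J1 n → Fin n → Fin n → ℝ)
    (m k : Fin n) (p : J1 n) : ℝ :=
  py (fun q => M q m) k p - Gc p m k + (if m = k then christoffelT h p.1 else 0)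

/-- The torsion d-tensor `P⁽ᵐ⁾⁽¹⁾₍₁₎ⱼ₍ₖ₎ = ∂N⁽ᵐ⁾₍₁₎ⱼ/∂yᵏ − Lᵐₖⱼ`. -/
def P0S (N : J1 n → Fin n → Fin n → ℝ) (Lc : J1 n → Fin n → Fin n → Fin n → ℝ)
    (m j k : Fin n) (p : J1 n) : ℝ :=
  py (fun q => N q m j) k p - Lc p m k j

/-- The `h_T`-horizontal covariant derivative `Cˡ⁽¹⁾ᵢ₍ₖ₎/₁`. -/
def CderT (h : ℝ → ℝ) (M : J1 n → Fin n → ℝ) (Gc : J1 n → Fin n → Fin n → ℝ)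
    (Cc : J1 n → Fin n → Fin n → Fin n → ℝ) (l i k : Fin n) (p : J1 n) : ℝ :=
  deltaT M (fun q => Cc q l i k) p + (∑ m, Cc p m i k * Gc p l m) -
    (∑ m, Cc p l m k * Gc p m i) -
    ∑ m, Cc p l i m * (Gc p m k - (if m = k then christoffelT h p.1 else 0))

/-- The `h_M`-horizontal covariant derivative `Cˡ⁽¹⁾ᵢ₍ₖ₎|ⱼ`. -/
def CderX (N : J1 n → Fin n → Fin n → ℝ) (Lc Cc : J1 n → Fin n → Fin n → Fin n → ℝ)
    (l i k j : Fin n) (p : J1 n) : ℝ :=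
  deltaX N (fun q => Cc q l i k) j p + (∑ m, Cc p m i k * Lc p l m j) -
    (∑ m, Cc p l m k * Lc p m i j) - ∑ m, Cc p l i m * Lc p m k j

/-- `Rˡᵢ₁ₖ = δGˡᵢ₁/δxᵏ − δLˡᵢₖ/δt + Gᵐᵢ₁Lˡₘₖ − LᵐᵢₖGˡₘ₁ + Cˡ⁽¹⁾ᵢ₍ₘ₎R⁽ᵐ⁾₍₁₎₁ₖ`. -/
def curvR1 (M : J1 n → Fin n → ℝ) (N : J1 n → Fin n → Fin n → ℝ)
    (Gc : J1 n → Fin n → Fin n → ℝ) (Lc Cc : J1 n → Fin n → Fin n → Fin n → ℝ)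
    (l i k : Fin n) (p : J1 n) : ℝ :=
  deltaX N (fun q => Gc q l i) k p - deltaT M (fun q => Lc q l i k) p +
    (∑ m, Gc p m i * Lc p l m k) - (∑ m, Lc p m i k * Gc p l m) +
    ∑ m, Cc p l i m * R01 M N m k p

/-- `Rˡᵢⱼₖ = δLˡᵢⱼ/δxᵏ − δLˡᵢₖ/δxʲ + LᵐᵢⱼLˡₘₖ − LᵐᵢₖLˡₘⱼ + Cˡ⁽¹⁾ᵢ₍ₘ₎R⁽ᵐ⁾₍₁₎ⱼₖ`. -/
def curvRS (N : J1 n → Fin n → Fin n → ℝ) (Lc Cc : J1 n → Fin n → Fin n → Fin n → ℝ)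
    (l i j k : Fin n) (p : J1 n) : ℝ :=
  deltaX N (fun q => Lc q l i j) k p - deltaX N (fun q => Lc q l i k) j p +
    (∑ m, Lc p m i j * Lc p l m k) - (∑ m, Lc p m i k * Lc p l m j) +
    ∑ m, Cc p l i m * R0S N m j k p

/-- `Pˡ⁽¹⁾ᵢ₁₍ₖ₎ = ∂Gˡᵢ₁/∂yᵏ − Cˡ⁽¹⁾ᵢ₍ₖ₎/₁ + Cˡ⁽¹⁾ᵢ₍ₘ₎P⁽ᵐ⁾⁽¹⁾₍₁₎₁₍ₖ₎`. -/
def curvP1 (h : ℝ → ℝ) (M : J1 n → Fin n → ℝ) (Gc : J1 n → Fin n → Fin n → ℝ)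
    (Cc : J1 n → Fin n → Fin n → Fin n → ℝ) (l i k : Fin n) (p : J1 n) : ℝ :=
  py (fun q => Gc q l i) k p - CderT h M Gc Cc l i k p +
    ∑ m, Cc p l i m * P01 h M Gc m k p

/-- `Pˡ⁽¹⁾ᵢⱼ₍ₖ₎ = ∂Lˡᵢⱼ/∂yᵏ − Cˡ⁽¹⁾ᵢ₍ₖ₎|ⱼ + Cˡ⁽¹⁾ᵢ₍ₘ₎P⁽ᵐ⁾⁽¹⁾₍₁₎ⱼ₍ₖ₎`. -/
def curvPS (N : J1 n → Fin n → Fin n → ℝ) (Lc Cc : J1 n → Fin n → Fin n → Fin n → ℝ)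
    (l i j k : Fin n) (p : J1 n) : ℝ :=
  py (fun q => Lc q l i j) k p - CderX N Lc Cc l i k j p +
    ∑ m, Cc p l i m * P0S N Lc m j k p

/-- `Sˡ⁽¹⁾⁽¹⁾ᵢ₍ⱼ₎₍ₖ₎ = ∂Cˡᵢ₍ⱼ₎/∂yᵏ − ∂Cˡᵢ₍ₖ₎/∂yʲ + Cᵐᵢ₍ⱼ₎Cˡₘ₍ₖ₎ − Cᵐᵢ₍ₖ₎Cˡₘ₍ⱼ₎`. -/
def curvS (Cc : J1 n → Fin n → Fin n → Fin n → ℝ) (l i j k : Fin n) (p : J1 n) : ℝ :=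
  py (fun q => Cc q l i j) k p - py (fun q => Cc q l i k) j p +
    (∑ m, Cc p m i j * Cc p l m k) - ∑ m, Cc p m i k * Cc p l m j

end CurvatureFormulas

section Lemmas
variable {n : ℕ}

lemma pt_const (c : ℝ) (p : J1 n) : pt (fun _ => c) p = 0 := deriv_const _ _
lemma px_const (c : ℝ) (j : Fin n) (p : J1 n) : px (fun _ => c) j p = 0 := deriv_const _ _
lemma py_const (c : ℝ) (j : Fin n) (p : J1 n) : py (fun _ => c) j p = 0 := deriv_const _ _
lemma px_tonly (g : ℝ → ℝ) (j : Fin n) (p : J1 n) : px (fun q => g q.1) j p = 0 := by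
  unfold px; simp
lemma py_tonly (g : ℝ → ℝ) (j : Fin n) (p : J1 n) : py (fun q => g q.1) j p = 0 := by
  unfold py; simp

lemma deltaT_const (M : J1 n → Fin n → ℝ) (c : ℝ) (p : J1 n) :
    deltaT M (fun _ => c) p = 0 := by
  simp [deltaT, pt_const, py_const]

lemma deltaX_const (N : J1 n → Fin n → Fin n → ℝ) (c : ℝ) (k : Fin n) (p : J1 n) :
    deltaX N (fun _ => c) k p = 0 := by
  simp [deltaX, px_const, py_const]

lemma sum_single_mul (i : Fin n) (f : Fin n → ℝ) :
    (∑ j, (Pi.single i 1 : Vec n) j * f j) = f i := by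
  simp [Pi.single_apply, ite_mul]

lemma hasDerivAt_update (x : Vec n) (j : Fin n) (s : ℝ) :
    HasDerivAt (fun s => Function.update x j s) (Pi.single j 1) s := by
  rw [hasDerivAt_pi]
  intro i
  by_cases hij : i = j
  · subst hij
    simp only [Pi.single_eq_same]
    simpa using (hasDerivAt_id s).congr_deriv rfl |>.congr_of_eventuallyEq
      (by filter_upwards with t; simp)
  · simp only [Pi.single_eq_of_ne hij]
    simpa using (hasDerivAt_const s (x i)).congr_of_eventuallyEq
      (by filter_upwards with t; simp [Function.update_apply, hij])

lemma pt_eq_fderiv {f : J1 n → ℝ} {p : J1 n} (hf : DifferentiableAt ℝ f p) :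
    pt f p = fderiv ℝ f p ((1:ℝ), (0:Vec n), (0:Vec n)) := by
  have hc : HasDerivAt (fun s : ℝ => ((s, p.2) : J1 n)) ((1:ℝ), (0 : Vec n × Vec n)) p.1 :=
    HasDerivAt.prodMk (hasDerivAt_id p.1) (hasDerivAt_const p.1 p.2)
  have h2 := hf.hasFDerivAt.comp_hasDerivAt p.1 hc
  exact h2.deriv

lemma px_eq_fderiv {f : J1 n → ℝ} {p : J1 n} (hf : DifferentiableAt ℝ f p) (j : Fin n) :
    px f j p = fderiv ℝ f p ((0:ℝ), Pi.single j 1, (0:Vec n)) := by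
  have hc : HasDerivAt (fun s : ℝ => ((p.1, Function.update p.2.1 j s, p.2.2) : J1 n))
      ((0:ℝ), Pi.single j 1, (0:Vec n)) (p.2.1 j) :=
    HasDerivAt.prodMk (hasDerivAt_const _ p.1) (HasDerivAt.prodMk (hasDerivAt_update p.2.1 j _) (hasDerivAt_const _ p.2.2))
  have hp : ((p.1, Function.update p.2.1 j (p.2.1 j), p.2.2) : J1 n) = p := by
    rw [Function.update_eq_self]
  have hf' : HasFDerivAt f (fderiv ℝ f p) ((p.1, Function.update p.2.1 j (p.2.1 j), p.2.2) : J1 n) := by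
    rw [hp]; exact hf.hasFDerivAt
  have h2 := hf'.comp_hasDerivAt (p.2.1 j) hc
  exact h2.deriv

lemma py_eq_fderiv {f : J1 n → ℝ} {p : J1 n} (hf : DifferentiableAt ℝ f p) (j : Fin n) :
    py f j p = fderiv ℝ f p ((0:ℝ), (0:Vec n), Pi.single j 1) := by
  have hc : HasDerivAt (fun s : ℝ => ((p.1, p.2.1, Function.update p.2.2 j s) : J1 n))
      ((0:ℝ), (0:Vec n), Pi.single j 1) (p.2.2 j) :=
    HasDerivAt.prodMk (hasDerivAt_const _ p.1) (HasDerivAt.prodMk (hasDerivAt_const _ p.2.1) (hasDerivAt_update p.2.2 j _))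
  have hp : ((p.1, p.2.1, Function.update p.2.2 j (p.2.2 j)) : J1 n) = p := by
    rw [Function.update_eq_self]
  have hf' : HasFDerivAt f (fderiv ℝ f p) ((p.1, p.2.1, Function.update p.2.2 j (p.2.2 j)) : J1 n) := by
    rw [hp]; exact hf.hasFDerivAt
  exact (hf'.comp_hasDerivAt (p.2.2 j) hc).deriv

lemma dir_decomp (d : J1 n) :
    d = d.1 • (((1:ℝ), (0:Vec n), (0:Vec n)) : J1 n)
      + (∑ i, d.2.1 i • (((0:ℝ), Pi.single i 1, (0:Vec n)) : J1 n))
      + ∑ i, d.2.2 i • (((0:ℝ), (0:Vec n), Pi.single i 1) : J1 n) := by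
  refine Prod.ext ?_ (Prod.ext ?_ ?_)
  · simp [Prod.fst_sum, Prod.snd_sum]
  · funext l
    simp [Prod.fst_sum, Prod.snd_sum, Finset.sum_apply, Pi.single_apply, mul_comm]
  · funext l
    simp [Prod.fst_sum, Prod.snd_sum, Finset.sum_apply, Pi.single_apply, mul_comm]

lemma fderiv_apply_dir {f : J1 n → ℝ} {p : J1 n} (hf : DifferentiableAt ℝ f p) (d : J1 n) :
    fderiv ℝ f p d = d.1 * pt f p + (∑ i, d.2.1 i * px f i p) + ∑ i, d.2.2 i * py f i p := by
  conv_lhs => rw [dir_decomp d]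
  rw [map_add, map_add, map_sum, map_sum, map_smul]
  simp only [map_smul, smul_eq_mul]
  rw [← pt_eq_fderiv hf]
  congr 1
  · congr 1
    exact Finset.sum_congr rfl fun i _ => by rw [← px_eq_fderiv hf]
  · exact Finset.sum_congr rfl fun i _ => by rw [← py_eq_fderiv hf]

end Lemmas
section Lemmas2
variable {n : ℕ}

lemma fderiv_frame_aux (a : ℝ) (b : Vec n) (F : J1 n → Fin n → ℝ) (p : J1 n)
    (hF : ∀ j, DifferentiableAt ℝ (fun q => F q j) p) (v : J1 n) :
    fderiv ℝ (fun q => ((a, b, fun j => -(F q j)) : J1 n)) p v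
      = ((0:ℝ), (0:Vec n), fun j => -(fderiv ℝ (fun q => F q j) p v)) := by
  have h : HasFDerivAt (fun q => ((a, b, fun j => -(F q j)) : J1 n))
      ((0 : J1 n →L[ℝ] ℝ).prod ((0 : J1 n →L[ℝ] Vec n).prod
        (ContinuousLinearMap.pi fun j => -(fderiv ℝ (fun q => F q j) p)))) p := by
    refine HasFDerivAt.prodMk (hasFDerivAt_const a p) (HasFDerivAt.prodMk (hasFDerivAt_const b p) ?_)
    exact hasFDerivAt_pi.mpr fun j => ((hF j).hasFDerivAt).neg
  rw [h.fderiv]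
  simp [ContinuousLinearMap.prod_apply, ContinuousLinearMap.pi_apply]

lemma diffAt_of_contDiff {f : J1 n → ℝ} (hf : ContDiff ℝ (⊤ : ℕ∞) f) (p : J1 n) :
    DifferentiableAt ℝ f p := (hf.differentiable (by simp)).differentiableAt

/-- directional derivative along frameX. -/
lemma fderiv_along_frameX {f : J1 n → ℝ} {p : J1 n} (hf : DifferentiableAt ℝ f p)
    (N : J1 n → Fin n → Fin n → ℝ) (k : Fin n) :
    fderiv ℝ f p (frameX N k p) = deltaX N f k p := by
  rw [fderiv_apply_dir hf, frameX, deltaX]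
  simp [sum_single_mul, sub_eq_add_neg]

lemma fderiv_along_frameT {f : J1 n → ℝ} {p : J1 n} (hf : DifferentiableAt ℝ f p)
    (M : J1 n → Fin n → ℝ) :
    fderiv ℝ f p (frameT M p) = deltaT M f p := by
  rw [fderiv_apply_dir hf, frameT, deltaT]
  simp [neg_mul, Finset.sum_neg_distrib, sub_eq_add_neg]

lemma fderiv_along_frameY {f : J1 n → ℝ} {p : J1 n} (hf : DifferentiableAt ℝ f p)
    (k : Fin n) :
    fderiv ℝ f p (frameY k p) = py f k p := by
  rw [fderiv_apply_dir hf, frameY]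
  simp [sum_single_mul]

end Lemmas2
section Lemmas3
variable {n : ℕ}

lemma bracket_TT (M : J1 n → Fin n → ℝ) (p : J1 n) :
    bracket (frameT M) (frameT M) p = 0 := by simp [bracket]

lemma bracket_YY (k j : Fin n) (p : J1 n) :
    bracket (frameY (n := n) k) (frameY j) p = 0 := by
  unfold bracket
  rw [show (frameY (n:=n) j) = fun _ : J1 n => (((0:ℝ), (0:Vec n), Pi.single j 1) : J1 n) from rfl]
  rw [show (frameY (n:=n) k) = fun _ : J1 n => (((0:ℝ), (0:Vec n), Pi.single k 1) : J1 n) from rfl]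
  rw [fderiv_fun_const, fderiv_fun_const]
  simp

lemma bracket_XT (M : J1 n → Fin n → ℝ) (N : J1 n → Fin n → Fin n → ℝ)
    (hM : ContDiff ℝ (⊤ : ℕ∞) M) (hN : ∀ i, ContDiff ℝ (⊤ : ℕ∞) (fun p => N p i)) (k : Fin n) (p : J1 n) :
    bracket (frameX N k) (frameT M) p = ((0:ℝ), (0:Vec n), fun m => -(R01 M N m k p)) := by
  have hMc : ∀ j, DifferentiableAt ℝ (fun q => M q j) p :=
    fun j => diffAt_of_contDiff (contDiff_pi.mp hM j) p
  have hNc : ∀ j, DifferentiableAt ℝ (fun q => N q j k) p :=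
    fun j => diffAt_of_contDiff (contDiff_pi.mp (hN j) k) p
  unfold bracket
  rw [show fderiv ℝ (frameT M) p = fderiv ℝ (fun q => (((1:ℝ), (0:Vec n), fun j => -(M q j)) : J1 n)) p from rfl]
  rw [show fderiv ℝ (frameX N k) p = fderiv ℝ (fun q => (((0:ℝ), (Pi.single k 1 : Vec n), fun j => -(N q j k)) : J1 n)) p from rfl]
  rw [fderiv_frame_aux _ _ _ p hMc, fderiv_frame_aux _ _ _ p hNc]
  refine Prod.ext (by simp) (Prod.ext (by simp) ?_)
  funext m
  simp only [Prod.snd_sub, Pi.sub_apply]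
  rw [fderiv_along_frameX (hMc m) N k, fderiv_along_frameT (hNc m) M, R01]
  ring

lemma bracket_XX (N : J1 n → Fin n → Fin n → ℝ)
    (hN : ∀ i, ContDiff ℝ (⊤ : ℕ∞) (fun p => N p i)) (k j : Fin n) (p : J1 n) :
    bracket (frameX N k) (frameX N j) p = ((0:ℝ), (0:Vec n), fun m => -(R0S N m j k p)) := by
  have hNc : ∀ m i, DifferentiableAt ℝ (fun q => N q m i) p :=
    fun m i => diffAt_of_contDiff (contDiff_pi.mp (hN m) i) p
  unfold bracket
  rw [show fderiv ℝ (frameX N j) p = fderiv ℝ (fun q => (((0:ℝ), (Pi.single j 1 : Vec n), fun m => -(N q m j)) : J1 n)) p from rfl]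
  rw [show fderiv ℝ (frameX N k) p = fderiv ℝ (fun q => (((0:ℝ), (Pi.single k 1 : Vec n), fun m => -(N q m k)) : J1 n)) p from rfl]
  rw [fderiv_frame_aux _ _ _ p (fun m => hNc m j), fderiv_frame_aux _ _ _ p (fun m => hNc m k)]
  refine Prod.ext (by simp) (Prod.ext (by simp) ?_)
  funext m
  simp only [Prod.snd_sub, Pi.sub_apply]
  rw [fderiv_along_frameX (hNc m j) N k, fderiv_along_frameX (hNc m k) N j, R0S]
  ring

lemma bracket_YT (M : J1 n → Fin n → ℝ) (hM : ContDiff ℝ (⊤ : ℕ∞) M) (k : Fin n) (p : J1 n) :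
    bracket (frameY k) (frameT M) p = ((0:ℝ), (0:Vec n), fun m => -(py (fun q => M q m) k p)) := by
  have hMc : ∀ j, DifferentiableAt ℝ (fun q => M q j) p :=
    fun j => diffAt_of_contDiff (contDiff_pi.mp hM j) p
  unfold bracket
  rw [show fderiv ℝ (frameT M) p = fderiv ℝ (fun q => (((1:ℝ), (0:Vec n), fun j => -(M q j)) : J1 n)) p from rfl]
  rw [fderiv_frame_aux _ _ _ p hMc]
  rw [show (frameY (n:=n) k) = fun _ : J1 n => (((0:ℝ), (0:Vec n), Pi.single k 1) : J1 n) from rfl]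
  rw [fderiv_fun_const]
  refine Prod.ext (by simp) (Prod.ext (by simp) ?_)
  funext m
  simp only [Prod.snd_sub, Pi.sub_apply, Pi.zero_apply, ContinuousLinearMap.zero_apply]
  rw [show (((0:ℝ), (0:Vec n), Pi.single k 1) : J1 n) = frameY (n:=n) k p from rfl,
    fderiv_along_frameY (hMc m) k]
  simp

lemma bracket_YX (N : J1 n → Fin n → Fin n → ℝ)
    (hN : ∀ i, ContDiff ℝ (⊤ : ℕ∞) (fun p => N p i)) (k j : Fin n) (p : J1 n) :
    bracket (frameY k) (frameX N j) p = ((0:ℝ), (0:Vec n), fun m => -(py (fun q => N q m j) k p)) := by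
  have hNc : ∀ m, DifferentiableAt ℝ (fun q => N q m j) p :=
    fun m => diffAt_of_contDiff (contDiff_pi.mp (hN m) j) p
  unfold bracket
  rw [show fderiv ℝ (frameX N j) p = fderiv ℝ (fun q => (((0:ℝ), (Pi.single j 1 : Vec n), fun m => -(N q m j)) : J1 n)) p from rfl]
  rw [fderiv_frame_aux _ _ _ p hNc]
  rw [show (frameY (n:=n) k) = fun _ : J1 n => (((0:ℝ), (0:Vec n), Pi.single k 1) : J1 n) from rfl]
  rw [fderiv_fun_const]
  refine Prod.ext (by simp) (Prod.ext (by simp) ?_)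
  funext m
  simp only [Prod.snd_sub, Pi.sub_apply, Pi.zero_apply, ContinuousLinearMap.zero_apply]
  rw [show (((0:ℝ), (0:Vec n), Pi.single k 1) : J1 n) = frameY (n:=n) k p from rfl,
    fderiv_along_frameY (hNc m) k]
  simp

lemma adOfNat_vert (M : J1 n → Fin n → ℝ) (N : J1 n → Fin n → Fin n → ℝ)
    (p : J1 n) (c : Vec n) :
    adOfNat M N p ((0:ℝ), (0:Vec n), c) = ((0:ℝ), (0:Vec n), c) := by
  simp [adOfNat]

lemma covDir_vert (M : J1 n → Fin n → ℝ) (N : J1 n → Fin n → Fin n → ℝ)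
    (Γ : GammaCoeffs n) (c : Vec n) (W : J1 n → J1 n) (p : J1 n) :
    covDir M N Γ ((0:ℝ), (0:Vec n), c) W p = ∑ i, c i • covY Γ W i p := by
  simp [covDir]

lemma adOfNat_zero (M : J1 n → Fin n → ℝ) (N : J1 n → Fin n → Fin n → ℝ) (p : J1 n) :
    adOfNat M N p 0 = 0 := by
  simp [adOfNat]
  rfl

lemma covDir_zero (M : J1 n → Fin n → ℝ) (N : J1 n → Fin n → Fin n → ℝ)
    (Γ : GammaCoeffs n) (W : J1 n → J1 n) (p : J1 n) :
    covDir M N Γ 0 W p = 0 := by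
  simp [covDir]

end Lemmas3
section Lemmas4
variable {n : ℕ} (h : ℝ → ℝ) (M : J1 n → Fin n → ℝ) (N : J1 n → Fin n → Fin n → ℝ)
  (Gc : J1 n → Fin n → Fin n → ℝ) (Lc Cc : J1 n → Fin n → Fin n → Fin n → ℝ)

lemma px_sub_tonly (f : J1 n → ℝ) (g : ℝ → ℝ) (j : Fin n) (p : J1 n) :
    px (fun q => f q - g q.1) j p = px f j p := by
  show deriv (fun s => f (p.1, Function.update p.2.1 j s, p.2.2) - g p.1) (p.2.1 j) = _
  rw [deriv_sub_const]
  rfl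

lemma py_sub_tonly (f : J1 n → ℝ) (g : ℝ → ℝ) (j : Fin n) (p : J1 n) :
    py (fun q => f q - g q.1) j p = py f j p := by
  show deriv (fun s => f (p.1, p.2.1, Function.update p.2.2 j s) - g p.1) (p.2.2 j) = _
  rw [deriv_sub_const]
  rfl

lemma deltaX_Gv (l i k : Fin n) (p : J1 n) :
    deltaX N (fun q => Gc q l i - (if l = i then christoffelT h q.1 else 0)) k p
      = deltaX N (fun q => Gc q l i) k p := by
  by_cases hli : l = i
  · simp only [if_pos hli]
    unfold deltaX
    rw [px_sub_tonly]
    congr 1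
    exact Finset.sum_congr rfl fun m _ => by rw [py_sub_tonly]
  · simp [hli]

lemma py_Gv (l i k : Fin n) (p : J1 n) :
    py (fun q => Gc q l i - (if l = i then christoffelT h q.1 else 0)) k p
      = py (fun q => Gc q l i) k p := by
  by_cases hli : l = i
  · simp only [if_pos hli]
    rw [py_sub_tonly]
  · simp [hli]

lemma covT_e0 (q : J1 n) :
    covT M (hNormalCoeffs h Gc Lc Cc) (fun _ => (((1:ℝ), (0:Vec n), (0:Vec n)) : J1 n)) q
      = ((christoffelT h q.1), (0:Vec n), (0:Vec n)) := by
  refine Prod.ext ?_ (Prod.ext ?_ ?_)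
  · simp [covT, hNormalCoeffs, deltaT_const]
  · funext l; simp [covT, hNormalCoeffs, deltaT_const]
  · funext l; simp [covT, hNormalCoeffs, deltaT_const]

lemma covX_e0 (j : Fin n) (q : J1 n) :
    covX N (hNormalCoeffs h Gc Lc Cc) (fun _ => (((1:ℝ), (0:Vec n), (0:Vec n)) : J1 n)) j q
      = ((0:ℝ), (0:Vec n), (0:Vec n)) := by
  refine Prod.ext ?_ (Prod.ext ?_ ?_)
  · simp [covX, hNormalCoeffs, deltaX_const]
  · funext l; simp [covX, hNormalCoeffs, deltaX_const]
  · funext l; simp [covX, hNormalCoeffs, deltaX_const]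

lemma covY_e0 (j : Fin n) (q : J1 n) :
    covY (hNormalCoeffs h Gc Lc Cc) (fun _ => (((1:ℝ), (0:Vec n), (0:Vec n)) : J1 n)) j q
      = ((0:ℝ), (0:Vec n), (0:Vec n)) := by
  refine Prod.ext ?_ (Prod.ext ?_ ?_)
  · simp [covY, hNormalCoeffs, py_const]
  · funext l; simp [covY, hNormalCoeffs, py_const]
  · funext l; simp [covY, hNormalCoeffs, py_const]

lemma covT_ex (i : Fin n) (q : J1 n) :
    covT M (hNormalCoeffs h Gc Lc Cc) (fun _ => (((0:ℝ), (Pi.single i 1 : Vec n), (0:Vec n)) : J1 n)) q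
      = ((0:ℝ), fun l => Gc q l i, (0:Vec n)) := by
  refine Prod.ext ?_ (Prod.ext ?_ ?_)
  · simp [covT, hNormalCoeffs, deltaT_const]
  · funext l; simp [covT, hNormalCoeffs, deltaT_const, sum_single_mul]
  · funext l; simp [covT, hNormalCoeffs, deltaT_const]

lemma covX_ex (i j : Fin n) (q : J1 n) :
    covX N (hNormalCoeffs h Gc Lc Cc) (fun _ => (((0:ℝ), (Pi.single i 1 : Vec n), (0:Vec n)) : J1 n)) j q
      = ((0:ℝ), fun l => Lc q l i j, (0:Vec n)) := by
  refine Prod.ext ?_ (Prod.ext ?_ ?_)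
  · simp [covX, hNormalCoeffs, deltaX_const]
  · funext l; simp [covX, hNormalCoeffs, deltaX_const, sum_single_mul]
  · funext l; simp [covX, hNormalCoeffs, deltaX_const]

lemma covY_ex (i j : Fin n) (q : J1 n) :
    covY (hNormalCoeffs h Gc Lc Cc) (fun _ => (((0:ℝ), (Pi.single i 1 : Vec n), (0:Vec n)) : J1 n)) j q
      = ((0:ℝ), fun l => Cc q l i j, (0:Vec n)) := by
  refine Prod.ext ?_ (Prod.ext ?_ ?_)
  · simp [covY, hNormalCoeffs, py_const]
  · funext l; simp [covY, hNormalCoeffs, py_const, sum_single_mul]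
  · funext l; simp [covY, hNormalCoeffs, py_const]

lemma covT_ey (i : Fin n) (q : J1 n) :
    covT M (hNormalCoeffs h Gc Lc Cc) (fun _ => (((0:ℝ), (0:Vec n), (Pi.single i 1 : Vec n)) : J1 n)) q
      = ((0:ℝ), (0:Vec n), fun l => Gc q l i - (if l = i then christoffelT h q.1 else 0)) := by
  refine Prod.ext ?_ (Prod.ext ?_ ?_)
  · simp [covT, hNormalCoeffs, deltaT_const]
  · funext l; simp [covT, hNormalCoeffs, deltaT_const]
  · funext l; simp [covT, hNormalCoeffs, deltaT_const, sum_single_mul]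

lemma covX_ey (i j : Fin n) (q : J1 n) :
    covX N (hNormalCoeffs h Gc Lc Cc) (fun _ => (((0:ℝ), (0:Vec n), (Pi.single i 1 : Vec n)) : J1 n)) j q
      = ((0:ℝ), (0:Vec n), fun l => Lc q l i j) := by
  refine Prod.ext ?_ (Prod.ext ?_ ?_)
  · simp [covX, hNormalCoeffs, deltaX_const]
  · funext l; simp [covX, hNormalCoeffs, deltaX_const]
  · funext l; simp [covX, hNormalCoeffs, deltaX_const, sum_single_mul]

lemma covY_ey (i j : Fin n) (q : J1 n) :
    covY (hNormalCoeffs h Gc Lc Cc) (fun _ => (((0:ℝ), (0:Vec n), (Pi.single i 1 : Vec n)) : J1 n)) j q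
      = ((0:ℝ), (0:Vec n), fun l => Cc q l i j) := by
  refine Prod.ext ?_ (Prod.ext ?_ ?_)
  · simp [covY, hNormalCoeffs, py_const]
  · funext l; simp [covY, hNormalCoeffs, py_const]
  · funext l; simp [covY, hNormalCoeffs, py_const, sum_single_mul]

end Lemmas4
section Claims
variable {n : ℕ} (h : ℝ → ℝ) (M : J1 n → Fin n → ℝ) (N : J1 n → Fin n → Fin n → ℝ)
  (Gc : J1 n → Fin n → Fin n → ℝ) (Lc Cc : J1 n → Fin n → Fin n → Fin n → ℝ)

lemma deltaX_chr (k : Fin n) (p : J1 n) :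
    deltaX N (fun q => christoffelT h q.1) k p = 0 := by
  simp [deltaX, px_tonly (christoffelT h), py_tonly (christoffelT h)]

lemma py_chr (k : Fin n) (p : J1 n) :
    py (fun q => christoffelT h q.1) k p = 0 := py_tonly (christoffelT h) k p

lemma claim_TT (p : J1 n) (Z : J1 n) :
    curvature M N (hNormalCoeffs h Gc Lc Cc) (covT M (hNormalCoeffs h Gc Lc Cc))
      (covT M (hNormalCoeffs h Gc Lc Cc)) (frameT M) (frameT M) Z p = 0 := by
  unfold curvature
  rw [bracket_TT, adOfNat_zero, covDir_zero, sub_self, sub_zero]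

lemma claim_XT_0 (hM : ContDiff ℝ (⊤ : ℕ∞) M) (hN : ∀ i, ContDiff ℝ (⊤ : ℕ∞) (fun p => N p i))
    (p : J1 n) (k : Fin n) :
    curvature M N (hNormalCoeffs h Gc Lc Cc) (fun W => covX N (hNormalCoeffs h Gc Lc Cc) W k)
      (covT M (hNormalCoeffs h Gc Lc Cc)) (frameX N k) (frameT M) ((1 : ℝ), 0, 0) p = 0 := by
  unfold curvature
  rw [bracket_XT M N hM hN k p, adOfNat_vert, covDir_vert]
  simp only [covT_e0, covX_e0, covY_e0]
  refine Prod.ext ?_ (Prod.ext ?_ ?_) <;>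
    simp [covX, covT, hNormalCoeffs, deltaX_const, deltaT_const, deltaX_chr,
      Prod.fst_sum, Prod.snd_sum, Finset.sum_apply]

lemma claim_XT_x (hM : ContDiff ℝ (⊤ : ℕ∞) M) (hN : ∀ i, ContDiff ℝ (⊤ : ℕ∞) (fun p => N p i))
    (p : J1 n) (k i : Fin n) :
    curvature M N (hNormalCoeffs h Gc Lc Cc) (fun W => covX N (hNormalCoeffs h Gc Lc Cc) W k)
      (covT M (hNormalCoeffs h Gc Lc Cc)) (frameX N k) (frameT M)
      ((0 : ℝ), Pi.single i 1, 0) p =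
    ((0 : ℝ), fun l => curvR1 M N Gc Lc Cc l i k p, 0) := by
  unfold curvature
  rw [bracket_XT M N hM hN k p, adOfNat_vert, covDir_vert]
  simp only [covT_ex, covX_ex, covY_ex]
  refine Prod.ext ?_ (Prod.ext ?_ ?_)
  · simp [covX, covT, hNormalCoeffs, deltaX_const, deltaT_const, Prod.fst_sum, Prod.snd_sum]
  · funext l
    simp only [covX, covT, hNormalCoeffs, Prod.snd_sub, Prod.fst_sub, Pi.sub_apply,
      Prod.snd_sum, Prod.fst_sum, Finset.sum_apply, Prod.smul_snd, Prod.smul_fst,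
      Pi.smul_apply, smul_eq_mul, Pi.neg_apply, neg_mul, neg_smul, Prod.fst_neg, Prod.snd_neg,
      deltaX_const, deltaT_const, Pi.zero_apply, zero_mul, mul_zero,
      Finset.sum_const_zero, add_zero, zero_add]
    rw [curvR1]
    rw [show (∑ m, -(R01 M N m k p * Cc p l i m)) = -∑ m, Cc p l i m * R01 M N m k p from by
      rw [← Finset.sum_neg_distrib]; exact Finset.sum_congr rfl fun m _ => by ring]
    ring
  · funext l
    simp [covX, covT, hNormalCoeffs, deltaX_const, deltaT_const,
      Prod.snd_sub, Pi.sub_apply, Prod.snd_sum, Prod.fst_sum, Prod.fst_sub,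
      Finset.sum_apply, Prod.smul_snd, Prod.smul_fst,
      Pi.smul_apply, smul_eq_mul]

lemma claim_XT_y (hM : ContDiff ℝ (⊤ : ℕ∞) M) (hN : ∀ i, ContDiff ℝ (⊤ : ℕ∞) (fun p => N p i))
    (p : J1 n) (k i : Fin n) :
    curvature M N (hNormalCoeffs h Gc Lc Cc) (fun W => covX N (hNormalCoeffs h Gc Lc Cc) W k)
      (covT M (hNormalCoeffs h Gc Lc Cc)) (frameX N k) (frameT M)
      ((0 : ℝ), 0, Pi.single i 1) p =
    ((0 : ℝ), 0, fun l => curvR1 M N Gc Lc Cc l i k p) := by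
  unfold curvature
  rw [bracket_XT M N hM hN k p, adOfNat_vert, covDir_vert]
  simp only [covT_ey, covX_ey, covY_ey]
  refine Prod.ext ?_ (Prod.ext ?_ ?_)
  · simp [covX, covT, hNormalCoeffs, deltaX_const, deltaT_const, Prod.fst_sum, Prod.snd_sum]
  · funext l
    simp [covX, covT, hNormalCoeffs, deltaX_const, deltaT_const,
      Prod.snd_sub, Pi.sub_apply, Prod.snd_sum, Prod.fst_sum, Prod.fst_sub,
      Finset.sum_apply, Prod.smul_snd, Prod.smul_fst,
      Pi.smul_apply, smul_eq_mul]
  · funext l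
    simp only [covX, covT, hNormalCoeffs, Prod.snd_sub, Prod.fst_sub, Pi.sub_apply,
      Prod.snd_sum, Prod.fst_sum, Finset.sum_apply, Prod.smul_snd, Prod.smul_fst,
      Pi.smul_apply, smul_eq_mul, Pi.neg_apply, neg_mul, neg_smul, Prod.fst_neg, Prod.snd_neg,
      deltaX_const, deltaT_const, Pi.zero_apply, zero_mul, mul_zero,
      Finset.sum_const_zero, add_zero, zero_add]
    rw [deltaX_Gv]
    simp only [sub_mul, mul_sub, mul_ite, ite_mul, mul_zero, zero_mul,
      Finset.sum_sub_distrib, Finset.sum_ite_eq, Finset.sum_ite_eq', Finset.mem_univ, if_true]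
    rw [curvR1]
    rw [show (∑ m, -(R01 M N m k p * Cc p l i m)) = -∑ m, Cc p l i m * R01 M N m k p from by
      rw [← Finset.sum_neg_distrib]; exact Finset.sum_congr rfl fun m _ => by ring]
    ring

lemma claim_XX_0 (hN : ∀ i, ContDiff ℝ (⊤ : ℕ∞) (fun p => N p i)) (p : J1 n) (k j : Fin n) :
    curvature M N (hNormalCoeffs h Gc Lc Cc) (fun W => covX N (hNormalCoeffs h Gc Lc Cc) W k)
      (fun W => covX N (hNormalCoeffs h Gc Lc Cc) W j) (frameX N k) (frameX N j)
      ((1 : ℝ), 0, 0) p = 0 := by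
  unfold curvature
  rw [bracket_XX N hN k j p, adOfNat_vert, covDir_vert]
  simp only [covX_e0, covY_e0]
  refine Prod.ext ?_ (Prod.ext ?_ ?_) <;>
    simp [covX, hNormalCoeffs, deltaX_const, Prod.fst_sum, Prod.snd_sum, Finset.sum_apply]

lemma claim_XX_x (hN : ∀ i, ContDiff ℝ (⊤ : ℕ∞) (fun p => N p i)) (p : J1 n) (k j i : Fin n) :
    curvature M N (hNormalCoeffs h Gc Lc Cc) (fun W => covX N (hNormalCoeffs h Gc Lc Cc) W k)
      (fun W => covX N (hNormalCoeffs h Gc Lc Cc) W j) (frameX N k) (frameX N j)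
      ((0 : ℝ), Pi.single i 1, 0) p =
    ((0 : ℝ), fun l => curvRS N Lc Cc l i j k p, 0) := by
  unfold curvature
  rw [bracket_XX N hN k j p, adOfNat_vert, covDir_vert]
  simp only [covX_ex, covY_ex]
  refine Prod.ext ?_ (Prod.ext ?_ ?_)
  · simp [covX, hNormalCoeffs, deltaX_const, Prod.fst_sum, Prod.snd_sum]
  · funext l
    simp only [covX, hNormalCoeffs, Prod.snd_sub, Prod.fst_sub, Pi.sub_apply,
      Prod.snd_sum, Prod.fst_sum, Finset.sum_apply, Prod.smul_snd, Prod.smul_fst,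
      Pi.smul_apply, smul_eq_mul, Pi.neg_apply, neg_mul, neg_smul, Prod.fst_neg, Prod.snd_neg,
      deltaX_const, Pi.zero_apply, zero_mul, mul_zero,
      Finset.sum_const_zero, add_zero, zero_add]
    rw [curvRS]
    rw [show (∑ m, -(R0S N m j k p * Cc p l i m)) = -∑ m, Cc p l i m * R0S N m j k p from by
      rw [← Finset.sum_neg_distrib]; exact Finset.sum_congr rfl fun m _ => by ring]
    ring
  · funext l
    simp [covX, hNormalCoeffs, deltaX_const,
      Prod.snd_sub, Pi.sub_apply, Prod.snd_sum, Prod.fst_sum, Prod.fst_sub,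
      Finset.sum_apply, Prod.smul_snd, Prod.smul_fst,
      Pi.smul_apply, smul_eq_mul]

lemma claim_XX_y (hN : ∀ i, ContDiff ℝ (⊤ : ℕ∞) (fun p => N p i)) (p : J1 n) (k j i : Fin n) :
    curvature M N (hNormalCoeffs h Gc Lc Cc) (fun W => covX N (hNormalCoeffs h Gc Lc Cc) W k)
      (fun W => covX N (hNormalCoeffs h Gc Lc Cc) W j) (frameX N k) (frameX N j)
      ((0 : ℝ), 0, Pi.single i 1) p =
    ((0 : ℝ), 0, fun l => curvRS N Lc Cc l i j k p) := by
  unfold curvature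
  rw [bracket_XX N hN k j p, adOfNat_vert, covDir_vert]
  simp only [covX_ey, covY_ey]
  refine Prod.ext ?_ (Prod.ext ?_ ?_)
  · simp [covX, hNormalCoeffs, deltaX_const, Prod.fst_sum, Prod.snd_sum]
  · funext l
    simp [covX, hNormalCoeffs, deltaX_const,
      Prod.snd_sub, Pi.sub_apply, Prod.snd_sum, Prod.fst_sum, Prod.fst_sub,
      Finset.sum_apply, Prod.smul_snd, Prod.smul_fst,
      Pi.smul_apply, smul_eq_mul]
  · funext l
    simp only [covX, hNormalCoeffs, Prod.snd_sub, Prod.fst_sub, Pi.sub_apply,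
      Prod.snd_sum, Prod.fst_sum, Finset.sum_apply, Prod.smul_snd, Prod.smul_fst,
      Pi.smul_apply, smul_eq_mul, Pi.neg_apply, neg_mul, neg_smul, Prod.fst_neg, Prod.snd_neg,
      deltaX_const, Pi.zero_apply, zero_mul, mul_zero,
      Finset.sum_const_zero, add_zero, zero_add]
    rw [curvRS]
    rw [show (∑ m, -(R0S N m j k p * Cc p l i m)) = -∑ m, Cc p l i m * R0S N m j k p from by
      rw [← Finset.sum_neg_distrib]; exact Finset.sum_congr rfl fun m _ => by ring]
    ring

end Claims
section Claims2
variable {n : ℕ} (h : ℝ → ℝ) (M : J1 n → Fin n → ℝ) (N : J1 n → Fin n → Fin n → ℝ)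
  (Gc : J1 n → Fin n → Fin n → ℝ) (Lc Cc : J1 n → Fin n → Fin n → Fin n → ℝ)

lemma claim_YT_0 (hM : ContDiff ℝ (⊤ : ℕ∞) M) (p : J1 n) (k : Fin n) :
    curvature M N (hNormalCoeffs h Gc Lc Cc) (fun W => covY (hNormalCoeffs h Gc Lc Cc) W k)
      (covT M (hNormalCoeffs h Gc Lc Cc)) (frameY k) (frameT M) ((1 : ℝ), 0, 0) p = 0 := by
  unfold curvature
  rw [bracket_YT M hM k p, adOfNat_vert, covDir_vert]
  simp only [covT_e0, covY_e0]
  refine Prod.ext ?_ (Prod.ext ?_ ?_) <;>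
    simp [covY, covT, hNormalCoeffs, py_const, deltaT_const, py_chr,
      Prod.fst_sum, Prod.snd_sum, Finset.sum_apply]

lemma claim_YT_x (hM : ContDiff ℝ (⊤ : ℕ∞) M) (p : J1 n) (k i : Fin n) :
    curvature M N (hNormalCoeffs h Gc Lc Cc) (fun W => covY (hNormalCoeffs h Gc Lc Cc) W k)
      (covT M (hNormalCoeffs h Gc Lc Cc)) (frameY k) (frameT M)
      ((0 : ℝ), Pi.single i 1, 0) p =
    ((0 : ℝ), fun l => curvP1 h M Gc Cc l i k p, 0) := by
  unfold curvature
  rw [bracket_YT M hM k p, adOfNat_vert, covDir_vert]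
  simp only [covT_ex, covY_ex]
  refine Prod.ext ?_ (Prod.ext ?_ ?_)
  · simp [covY, covT, hNormalCoeffs, py_const, deltaT_const, Prod.fst_sum, Prod.snd_sum]
  · funext l
    simp only [covY, covT, hNormalCoeffs, Prod.snd_sub, Prod.fst_sub, Pi.sub_apply,
      Prod.snd_sum, Prod.fst_sum, Finset.sum_apply, Prod.smul_snd, Prod.smul_fst,
      Pi.smul_apply, smul_eq_mul, Pi.neg_apply, neg_mul, neg_smul, Prod.fst_neg, Prod.snd_neg,
      py_const, deltaT_const, Pi.zero_apply, zero_mul, mul_zero,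
      Finset.sum_const_zero, add_zero, zero_add]
    simp only [curvP1, CderT, P01, mul_sub, mul_add, mul_ite, mul_zero,
      Finset.sum_sub_distrib, Finset.sum_add_distrib, Finset.sum_ite_eq',
      Finset.mem_univ, if_true]
    rw [show (∑ m, Gc p m i * Cc p l m k) = ∑ m, Cc p l m k * Gc p m i from
      Finset.sum_congr rfl fun m _ => mul_comm _ _]
    rw [show (∑ m, -(py (fun q => M q m) k p * Cc p l i m))
        = -∑ m, Cc p l i m * py (fun q => M q m) k p from by
      rw [← Finset.sum_neg_distrib]; exact Finset.sum_congr rfl fun m _ => by ring]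
    ring
  · funext l
    simp [covY, covT, hNormalCoeffs, py_const, deltaT_const,
      Prod.snd_sub, Pi.sub_apply, Prod.snd_sum, Prod.fst_sum, Prod.fst_sub,
      Finset.sum_apply, Prod.smul_snd, Prod.smul_fst, Pi.smul_apply, smul_eq_mul]

lemma claim_YT_y (hM : ContDiff ℝ (⊤ : ℕ∞) M) (p : J1 n) (k i : Fin n) :
    curvature M N (hNormalCoeffs h Gc Lc Cc) (fun W => covY (hNormalCoeffs h Gc Lc Cc) W k)
      (covT M (hNormalCoeffs h Gc Lc Cc)) (frameY k) (frameT M)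
      ((0 : ℝ), 0, Pi.single i 1) p =
    ((0 : ℝ), 0, fun l => curvP1 h M Gc Cc l i k p) := by
  unfold curvature
  rw [bracket_YT M hM k p, adOfNat_vert, covDir_vert]
  simp only [covT_ey, covY_ey]
  refine Prod.ext ?_ (Prod.ext ?_ ?_)
  · simp [covY, covT, hNormalCoeffs, py_const, deltaT_const, Prod.fst_sum, Prod.snd_sum]
  · funext l
    simp [covY, covT, hNormalCoeffs, py_const, deltaT_const,
      Prod.snd_sub, Pi.sub_apply, Prod.snd_sum, Prod.fst_sum, Prod.fst_sub,
      Finset.sum_apply, Prod.smul_snd, Prod.smul_fst, Pi.smul_apply, smul_eq_mul]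
  · funext l
    simp only [covY, covT, hNormalCoeffs, Prod.snd_sub, Prod.fst_sub, Pi.sub_apply,
      Prod.snd_sum, Prod.fst_sum, Finset.sum_apply, Prod.smul_snd, Prod.smul_fst,
      Pi.smul_apply, smul_eq_mul, Pi.neg_apply, neg_mul, neg_smul, Prod.fst_neg, Prod.snd_neg,
      py_const, deltaT_const, Pi.zero_apply, zero_mul, mul_zero,
      Finset.sum_const_zero, add_zero, zero_add]
    rw [py_Gv]
    simp only [curvP1, CderT, P01, sub_mul, mul_sub, mul_add, mul_ite, ite_mul,
      mul_zero, zero_mul, Finset.sum_sub_distrib, Finset.sum_add_distrib,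
      Finset.sum_ite_eq, Finset.sum_ite_eq', Finset.mem_univ, if_true]
    rw [show (∑ m, Gc p m i * Cc p l m k) = ∑ m, Cc p l m k * Gc p m i from
      Finset.sum_congr rfl fun m _ => mul_comm _ _]
    rw [show (∑ m, -(py (fun q => M q m) k p * Cc p l i m))
        = -∑ m, Cc p l i m * py (fun q => M q m) k p from by
      rw [← Finset.sum_neg_distrib]; exact Finset.sum_congr rfl fun m _ => by ring]
    ring

lemma claim_YX_0 (hN : ∀ i, ContDiff ℝ (⊤ : ℕ∞) (fun p => N p i)) (p : J1 n) (k j : Fin n) :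
    curvature M N (hNormalCoeffs h Gc Lc Cc) (fun W => covY (hNormalCoeffs h Gc Lc Cc) W k)
      (fun W => covX N (hNormalCoeffs h Gc Lc Cc) W j) (frameY k) (frameX N j)
      ((1 : ℝ), 0, 0) p = 0 := by
  unfold curvature
  rw [bracket_YX N hN k j p, adOfNat_vert, covDir_vert]
  simp only [covX_e0, covY_e0]
  refine Prod.ext ?_ (Prod.ext ?_ ?_) <;>
    simp [covY, covX, hNormalCoeffs, py_const, deltaX_const,
      Prod.fst_sum, Prod.snd_sum, Finset.sum_apply]

lemma claim_YX_x (hN : ∀ i, ContDiff ℝ (⊤ : ℕ∞) (fun p => N p i)) (p : J1 n) (k j i : Fin n) :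
    curvature M N (hNormalCoeffs h Gc Lc Cc) (fun W => covY (hNormalCoeffs h Gc Lc Cc) W k)
      (fun W => covX N (hNormalCoeffs h Gc Lc Cc) W j) (frameY k) (frameX N j)
      ((0 : ℝ), Pi.single i 1, 0) p =
    ((0 : ℝ), fun l => curvPS N Lc Cc l i j k p, 0) := by
  unfold curvature
  rw [bracket_YX N hN k j p, adOfNat_vert, covDir_vert]
  simp only [covX_ex, covY_ex]
  refine Prod.ext ?_ (Prod.ext ?_ ?_)
  · simp [covY, covX, hNormalCoeffs, py_const, deltaX_const, Prod.fst_sum, Prod.snd_sum]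
  · funext l
    simp only [covY, covX, hNormalCoeffs, Prod.snd_sub, Prod.fst_sub, Pi.sub_apply,
      Prod.snd_sum, Prod.fst_sum, Finset.sum_apply, Prod.smul_snd, Prod.smul_fst,
      Pi.smul_apply, smul_eq_mul, Pi.neg_apply, neg_mul, neg_smul, Prod.fst_neg, Prod.snd_neg,
      py_const, deltaX_const, Pi.zero_apply, zero_mul, mul_zero,
      Finset.sum_const_zero, add_zero, zero_add]
    simp only [curvPS, CderX, P0S, mul_sub, mul_add, Finset.sum_sub_distrib,
      Finset.sum_add_distrib]
    rw [show (∑ m, Lc p m i j * Cc p l m k) = ∑ m, Cc p l m k * Lc p m i j from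
      Finset.sum_congr rfl fun m _ => mul_comm _ _]
    rw [show (∑ m, -(py (fun q => N q m j) k p * Cc p l i m))
        = -∑ m, Cc p l i m * py (fun q => N q m j) k p from by
      rw [← Finset.sum_neg_distrib]; exact Finset.sum_congr rfl fun m _ => by ring]
    ring
  · funext l
    simp [covY, covX, hNormalCoeffs, py_const, deltaX_const,
      Prod.snd_sub, Pi.sub_apply, Prod.snd_sum, Prod.fst_sum, Prod.fst_sub,
      Finset.sum_apply, Prod.smul_snd, Prod.smul_fst, Pi.smul_apply, smul_eq_mul]

lemma claim_YX_y (hN : ∀ i, ContDiff ℝ (⊤ : ℕ∞) (fun p => N p i)) (p : J1 n) (k j i : Fin n) :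
    curvature M N (hNormalCoeffs h Gc Lc Cc) (fun W => covY (hNormalCoeffs h Gc Lc Cc) W k)
      (fun W => covX N (hNormalCoeffs h Gc Lc Cc) W j) (frameY k) (frameX N j)
      ((0 : ℝ), 0, Pi.single i 1) p =
    ((0 : ℝ), 0, fun l => curvPS N Lc Cc l i j k p) := by
  unfold curvature
  rw [bracket_YX N hN k j p, adOfNat_vert, covDir_vert]
  simp only [covX_ey, covY_ey]
  refine Prod.ext ?_ (Prod.ext ?_ ?_)
  · simp [covY, covX, hNormalCoeffs, py_const, deltaX_const, Prod.fst_sum, Prod.snd_sum]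
  · funext l
    simp [covY, covX, hNormalCoeffs, py_const, deltaX_const,
      Prod.snd_sub, Pi.sub_apply, Prod.snd_sum, Prod.fst_sum, Prod.fst_sub,
      Finset.sum_apply, Prod.smul_snd, Prod.smul_fst, Pi.smul_apply, smul_eq_mul]
  · funext l
    simp only [covY, covX, hNormalCoeffs, Prod.snd_sub, Prod.fst_sub, Pi.sub_apply,
      Prod.snd_sum, Prod.fst_sum, Finset.sum_apply, Prod.smul_snd, Prod.smul_fst,
      Pi.smul_apply, smul_eq_mul, Pi.neg_apply, neg_mul, neg_smul, Prod.fst_neg, Prod.snd_neg,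
      py_const, deltaX_const, Pi.zero_apply, zero_mul, mul_zero,
      Finset.sum_const_zero, add_zero, zero_add]
    simp only [curvPS, CderX, P0S, mul_sub, mul_add, Finset.sum_sub_distrib,
      Finset.sum_add_distrib]
    rw [show (∑ m, Lc p m i j * Cc p l m k) = ∑ m, Cc p l m k * Lc p m i j from
      Finset.sum_congr rfl fun m _ => mul_comm _ _]
    rw [show (∑ m, -(py (fun q => N q m j) k p * Cc p l i m))
        = -∑ m, Cc p l i m * py (fun q => N q m j) k p from by
      rw [← Finset.sum_neg_distrib]; exact Finset.sum_congr rfl fun m _ => by ring]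
    ring

lemma claim_YY_0 (p : J1 n) (k j : Fin n) :
    curvature M N (hNormalCoeffs h Gc Lc Cc) (fun W => covY (hNormalCoeffs h Gc Lc Cc) W k)
      (fun W => covY (hNormalCoeffs h Gc Lc Cc) W j) (frameY k) (frameY j)
      ((1 : ℝ), 0, 0) p = 0 := by
  unfold curvature
  rw [bracket_YY, adOfNat_zero, covDir_zero]
  simp only [covY_e0]
  refine Prod.ext ?_ (Prod.ext ?_ ?_) <;>
    simp [covY, hNormalCoeffs, py_const]

lemma claim_YY_x (p : J1 n) (k j i : Fin n) :
    curvature M N (hNormalCoeffs h Gc Lc Cc) (fun W => covY (hNormalCoeffs h Gc Lc Cc) W k)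
      (fun W => covY (hNormalCoeffs h Gc Lc Cc) W j) (frameY k) (frameY j)
      ((0 : ℝ), Pi.single i 1, 0) p =
    ((0 : ℝ), fun l => curvS Cc l i j k p, 0) := by
  unfold curvature
  rw [bracket_YY, adOfNat_zero, covDir_zero]
  simp only [covY_ex]
  refine Prod.ext ?_ (Prod.ext ?_ ?_)
  · simp [covY, hNormalCoeffs, py_const]
  · funext l
    simp only [covY, hNormalCoeffs, Prod.snd_sub, Prod.fst_sub, Pi.sub_apply,
      py_const, Pi.zero_apply, zero_mul, mul_zero, Finset.sum_const_zero,
      add_zero, zero_add, sub_zero, Prod.snd_zero, Prod.fst_zero]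
    rw [curvS]
    ring
  · funext l
    simp [covY, hNormalCoeffs, py_const, Prod.snd_sub, Pi.sub_apply]

lemma claim_YY_y (p : J1 n) (k j i : Fin n) :
    curvature M N (hNormalCoeffs h Gc Lc Cc) (fun W => covY (hNormalCoeffs h Gc Lc Cc) W k)
      (fun W => covY (hNormalCoeffs h Gc Lc Cc) W j) (frameY k) (frameY j)
      ((0 : ℝ), 0, Pi.single i 1) p =
    ((0 : ℝ), 0, fun l => curvS Cc l i j k p) := by
  unfold curvature
  rw [bracket_YY, adOfNat_zero, covDir_zero]
  simp only [covY_ey]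
  refine Prod.ext ?_ (Prod.ext ?_ ?_)
  · simp [covY, hNormalCoeffs, py_const]
  · funext l
    simp [covY, hNormalCoeffs, py_const, Prod.snd_sub, Prod.fst_sub, Pi.sub_apply]
  · funext l
    simp only [covY, hNormalCoeffs, Prod.snd_sub, Prod.fst_sub, Pi.sub_apply,
      py_const, Pi.zero_apply, zero_mul, mul_zero, Finset.sum_const_zero,
      add_zero, zero_add, sub_zero, Prod.snd_zero, Prod.fst_zero]
    rw [curvS]
    ring

end Claims2

/-- The curvature d-tensor of an `h`-normal `Γ`-linear connection
`∇ = (H¹₁₁, Gᵏᵢ₁, Lᵏᵢⱼ, Cᵏ⁽¹⁾ᵢ₍ⱼ₎)` on `J¹(ℝ,M)` is determined by exactly five effective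
families of local d-curvatures `Rˡᵢ₁ₖ`, `Rˡᵢⱼₖ`, `Pˡ⁽¹⁾ᵢ₁₍ₖ₎`, `Pˡ⁽¹⁾ᵢⱼ₍ₖ₎`,
`Sˡ⁽¹⁾⁽¹⁾ᵢ₍ⱼ₎₍ₖ₎`: the vertical adapted components coincide with the horizontal-spatial
ones, and all components with a temporal upper index (and all components obtained by acting
on `δ/δt`, as well as the whole `h_T h_T` row) vanish. -/
theorem curvature_of_h_normal_connection
    {n : ℕ} (h : ℝ → ℝ) (hsm : ContDiff ℝ (⊤ : ℕ∞) h) (hne : ∀ t, h t ≠ 0)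
    (M : J1 n → Fin n → ℝ) (N : J1 n → Fin n → Fin n → ℝ)
    (hM : ContDiff ℝ (⊤ : ℕ∞) M) (hN : ∀ i, ContDiff ℝ (⊤ : ℕ∞) (fun p => N p i))
    (Gc : J1 n → Fin n → Fin n → ℝ) (Lc Cc : J1 n → Fin n → Fin n → Fin n → ℝ)
    (hGc : ∀ k i, ContDiff ℝ (⊤ : ℕ∞) (fun p => Gc p k i))
    (hLc : ∀ k i j, ContDiff ℝ (⊤ : ℕ∞) (fun p => Lc p k i j))
    (hCc : ∀ k i j, ContDiff ℝ (⊤ : ℕ∞) (fun p => Cc p k i j)) :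
    letI Γ := hNormalCoeffs h Gc Lc Cc
    -- `h_T h_T` row: R(δ/δt, δ/δt) = 0
    (∀ (p : J1 n) (Z : J1 n),
      curvature M N Γ (covT M Γ) (covT M Γ) (frameT M) (frameT M) Z p = 0) ∧
    -- `h_M h_T` row: R(δ/δxᵏ, δ/δt)
    (∀ (p : J1 n) (k : Fin n),
      curvature M N Γ (fun W => covX N Γ W k) (covT M Γ) (frameX N k) (frameT M)
        ((1 : ℝ), 0, 0) p = 0) ∧
    (∀ (p : J1 n) (k i : Fin n),
      curvature M N Γ (fun W => covX N Γ W k) (covT M Γ) (frameX N k) (frameT M)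
        ((0 : ℝ), Pi.single i 1, 0) p =
      ((0 : ℝ), fun l => curvR1 M N Gc Lc Cc l i k p, 0)) ∧
    (∀ (p : J1 n) (k i : Fin n),
      curvature M N Γ (fun W => covX N Γ W k) (covT M Γ) (frameX N k) (frameT M)
        ((0 : ℝ), 0, Pi.single i 1) p =
      ((0 : ℝ), 0, fun l => curvR1 M N Gc Lc Cc l i k p)) ∧
    -- `h_M h_M` row: R(δ/δxᵏ, δ/δxʲ)
    (∀ (p : J1 n) (k j : Fin n),
      curvature M N Γ (fun W => covX N Γ W k) (fun W => covX N Γ W j)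
        (frameX N k) (frameX N j) ((1 : ℝ), 0, 0) p = 0) ∧
    (∀ (p : J1 n) (k j i : Fin n),
      curvature M N Γ (fun W => covX N Γ W k) (fun W => covX N Γ W j)
        (frameX N k) (frameX N j) ((0 : ℝ), Pi.single i 1, 0) p =
      ((0 : ℝ), fun l => curvRS N Lc Cc l i j k p, 0)) ∧
    (∀ (p : J1 n) (k j i : Fin n),
      curvature M N Γ (fun W => covX N Γ W k) (fun W => covX N Γ W j)
        (frameX N k) (frameX N j) ((0 : ℝ), 0, Pi.single i 1) p =
      ((0 : ℝ), 0, fun l => curvRS N Lc Cc l i j k p)) ∧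
    -- `v h_T` row: R(∂/∂yᵏ, δ/δt)
    (∀ (p : J1 n) (k : Fin n),
      curvature M N Γ (fun W => covY Γ W k) (covT M Γ) (frameY k) (frameT M)
        ((1 : ℝ), 0, 0) p = 0) ∧
    (∀ (p : J1 n) (k i : Fin n),
      curvature M N Γ (fun W => covY Γ W k) (covT M Γ) (frameY k) (frameT M)
        ((0 : ℝ), Pi.single i 1, 0) p =
      ((0 : ℝ), fun l => curvP1 h M Gc Cc l i k p, 0)) ∧
    (∀ (p : J1 n) (k i : Fin n),
      curvature M N Γ (fun W => covY Γ W k) (covT M Γ) (frameY k) (frameT M)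
        ((0 : ℝ), 0, Pi.single i 1) p =
      ((0 : ℝ), 0, fun l => curvP1 h M Gc Cc l i k p)) ∧
    -- `v h_M` row: R(∂/∂yᵏ, δ/δxʲ)
    (∀ (p : J1 n) (k j : Fin n),
      curvature M N Γ (fun W => covY Γ W k) (fun W => covX N Γ W j)
        (frameY k) (frameX N j) ((1 : ℝ), 0, 0) p = 0) ∧
    (∀ (p : J1 n) (k j i : Fin n),
      curvature M N Γ (fun W => covY Γ W k) (fun W => covX N Γ W j)
        (frameY k) (frameX N j) ((0 : ℝ), Pi.single i 1, 0) p =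
      ((0 : ℝ), fun l => curvPS N Lc Cc l i j k p, 0)) ∧
    (∀ (p : J1 n) (k j i : Fin n),
      curvature M N Γ (fun W => covY Γ W k) (fun W => covX N Γ W j)
        (frameY k) (frameX N j) ((0 : ℝ), 0, Pi.single i 1) p =
      ((0 : ℝ), 0, fun l => curvPS N Lc Cc l i j k p)) ∧
    -- `v v` row: R(∂/∂yᵏ, ∂/∂yʲ)
    (∀ (p : J1 n) (k j : Fin n),
      curvature M N Γ (fun W => covY Γ W k) (fun W => covY Γ W j)
        (frameY k) (frameY j) ((1 : ℝ), 0, 0) p = 0) ∧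
    (∀ (p : J1 n) (k j i : Fin n),
      curvature M N Γ (fun W => covY Γ W k) (fun W => covY Γ W j)
        (frameY k) (frameY j) ((0 : ℝ), Pi.single i 1, 0) p =
      ((0 : ℝ), fun l => curvS Cc l i j k p, 0)) ∧
    (∀ (p : J1 n) (k j i : Fin n),
      curvature M N Γ (fun W => covY Γ W k) (fun W => covY Γ W j)
        (frameY k) (frameY j) ((0 : ℝ), 0, Pi.single i 1) p =
      ((0 : ℝ), 0, fun l => curvS Cc l i j k p)) := by
  refine ⟨claim_TT h M N Gc Lc Cc,
    claim_XT_0 h M N Gc Lc Cc hM hN,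
    claim_XT_x h M N Gc Lc Cc hM hN,
    claim_XT_y h M N Gc Lc Cc hM hN,
    claim_XX_0 h M N Gc Lc Cc hN,
    claim_XX_x h M N Gc Lc Cc hN,
    claim_XX_y h M N Gc Lc Cc hN,
    claim_YT_0 h M N Gc Lc Cc hM,
    claim_YT_x h M N Gc Lc Cc hM,
    claim_YT_y h M N Gc Lc Cc hM,
    claim_YX_0 h M N Gc Lc Cc hN,
    claim_YX_x h M N Gc Lc Cc hN,
    claim_YX_y h M N Gc Lc Cc hN,
    claim_YY_0 h M N Gc Lc Cc,
    claim_YY_x h M N Gc Lc Cc,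
    claim_YY_y h M N Gc Lc Cc⟩


end Jet
end
end

section
/- The extremals of the energy action functional ℰ(c) = ∫_a^b L(t, x^i(t), dx^i/dt) √|h_{11}| dt attached to a Kronecker h-regular Lagrangian function L on J^1(R,M) are exactly the harmonic curves, with respect to h, of the time-dependent spray (H,G) with temporal components H^{(i)}_{(1)1} = −(1/2)H^1_{11}(t)y^i and spatial components G^{(i)}_{(1)1} = (h_{11}g^{ik}/4)[ (∂²L/∂x^j∂y^k)y^j − ∂L/∂x^k + ∂²L/∂t∂y^k + (∂L/∂y^k)H^1_{11} + 2h^{11}H^1_{11}g_{kl}y^l ]; that is, the Euler–Lagrange equations of ℰ are equivalent to h^{11}{ d²x^i/dt² + 2G^{(i)}_{(1)1} + 2H^{(i)}_{(1)1} } = 0 with y^i = dx^i/dt. -/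
noncomputable section

open scoped BigOperators

namespace Jet

variable {n : ℕ}

/-- A Lagrangian function `L` is Kronecker `h`-regular with fundamental tensor `g` if
`(1/2) ∂²L/∂yⁱ∂yʲ = h¹¹(t) gᵢⱼ(t,x,y)`. -/
def KroneckerHRegular {n : ℕ} (h : ℝ → ℝ) (L : J1 n → ℝ)
    (g : J1 n → Matrix (Fin n) (Fin n) ℝ) : Prop :=
  ∀ (p : J1 n) (i j : Fin n),
    (1 / 2) * py (fun q => py L i q) j p = (1 / h p.1) * g p i j

/-- Velocity of a curve. -/
def vel {n : ℕ} (x : ℝ → Vec n) (t : ℝ) : Vec n := fun i => deriv (fun s => x s i) t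

/-- Acceleration of a curve. -/
def acc {n : ℕ} (x : ℝ → Vec n) (t : ℝ) : Vec n :=
  fun i => deriv (deriv (fun s => x s i)) t

/-- The canonical temporal spray `H⁽ⁱ⁾₍₁₎₁ = −(1/2)H¹₁₁(t) yⁱ`. -/
def canonicalH {n : ℕ} (h : ℝ → ℝ) (p : J1 n) (i : Fin n) : ℝ :=
  -(1 / 2) * christoffelT h p.1 * p.2.2 i

/-- The canonical spatial spray of a Kronecker `h`-regular Lagrangian:
`G⁽ⁱ⁾₍₁₎₁ = (h₁₁gⁱᵏ/4)[(∂²L/∂xʲ∂yᵏ)yʲ − ∂L/∂xᵏ + ∂²L/∂t∂yᵏ + (∂L/∂yᵏ)H¹₁₁ + 2h¹¹H¹₁₁gₖₗyˡ]`. -/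
def canonicalG {n : ℕ} (h : ℝ → ℝ) (L : J1 n → ℝ)
    (g : J1 n → Matrix (Fin n) (Fin n) ℝ) (p : J1 n) (i : Fin n) : ℝ :=
  (h p.1 / 4) * ∑ k, (g p)⁻¹ i k *
    ((∑ j, px (fun q => py L k q) j p * p.2.2 j) - px L k p +
      pt (fun q => py L k q) p + py L k p * christoffelT h p.1 +
      2 * (1 / h p.1) * christoffelT h p.1 * ∑ l, g p k l * p.2.2 l)

/-- The left-hand side of the Euler–Lagrange equations of the energy action functional
`ℰ(c) = ∫ L √|h₁₁| dt`:
`2h¹¹gᵢⱼ d²xʲ/dt² + (∂²L/∂xʲ∂yⁱ)dxʲ/dt − ∂L/∂xⁱ + ∂²L/∂t∂yⁱ + (∂L/∂yⁱ)H¹₁₁`. -/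
def eulerLagrange {n : ℕ} (h : ℝ → ℝ) (L : J1 n → ℝ)
    (g : J1 n → Matrix (Fin n) (Fin n) ℝ) (x : ℝ → Vec n) (t : ℝ) (i : Fin n) : ℝ :=
  2 * (1 / h t) * (∑ j, g (t, x t, vel x t) i j * acc x t j) +
    (∑ j, px (fun q => py L i q) j (t, x t, vel x t) * vel x t j) -
    px L i (t, x t, vel x t) + pt (fun q => py L i q) (t, x t, vel x t) +
    py L i (t, x t, vel x t) * christoffelT h t

/-- The "force" terms of the Euler–Lagrange equations (everything except the
acceleration term). -/
def Aterm {n : ℕ} (h : ℝ → ℝ) (L : J1 n → ℝ) (p : J1 n) (k : Fin n) : ℝ :=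
  (∑ j, px (fun q => py L k q) j p * p.2.2 j) - px L k p +
    pt (fun q => py L k q) p + py L k p * christoffelT h p.1

lemma eulerLagrange_eq {n : ℕ} (h : ℝ → ℝ) (L : J1 n → ℝ)
    (g : J1 n → Matrix (Fin n) (Fin n) ℝ) (x : ℝ → Vec n) (t : ℝ) (i : Fin n) :
    eulerLagrange h L g x t i =
      2 * (1 / h t) * (∑ j, g (t, x t, vel x t) i j * acc x t j) +
        Aterm h L (t, x t, vel x t) i := by
  simp only [eulerLagrange, Aterm]; ring

lemma canonicalG_eq {n : ℕ} (h : ℝ → ℝ) (L : J1 n → ℝ)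
    (g : J1 n → Matrix (Fin n) (Fin n) ℝ) (p : J1 n) (i : Fin n) :
    canonicalG h L g p i =
      (h p.1 / 4) * ((∑ k, (g p)⁻¹ i k * Aterm h L p k) +
        2 * (1 / h p.1) * christoffelT h p.1 *
          ∑ k, (g p)⁻¹ i k * ∑ l, g p k l * p.2.2 l) := by
  simp only [canonicalG, Aterm]
  congr 1
  rw [Finset.mul_sum, ← Finset.sum_add_distrib]
  exact Finset.sum_congr rfl fun k _ => by ring

/-- The extremals of the energy action functional attached to a Kronecker
`h`-regular Lagrangian function `L` on `J¹(ℝ,M)` are exactly the harmonic curves, with respect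
to `h`, of the canonical time-dependent spray `(H,G)`: the Euler–Lagrange equations are
equivalent to `h¹¹{d²xⁱ/dt² + 2G⁽ⁱ⁾₍₁₎₁ + 2H⁽ⁱ⁾₍₁₎₁} = 0` with `yⁱ = dxⁱ/dt`. -/
theorem extremals_are_harmonic_curves_of_canonical_spray
    {n : ℕ} (h : ℝ → ℝ) (L : J1 n → ℝ) (g : J1 n → Matrix (Fin n) (Fin n) ℝ)
    (hreg : KroneckerHRegular h L g)
    (hL : ContDiff ℝ (⊤ : ℕ∞) L) (hsm : ContDiff ℝ (⊤ : ℕ∞) h) (hne : ∀ t, h t ≠ 0)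
    (gsymm : ∀ p i j, g p i j = g p j i) (gunit : ∀ p, IsUnit (g p).det)
    (x : ℝ → Vec n) (hx : ContDiff ℝ (⊤ : ℕ∞) x) :
    ∀ t : ℝ,
      (∀ i : Fin n, eulerLagrange h L g x t i = 0) ↔
      (∀ i : Fin n,
        (1 / h t) *
          (acc x t i + 2 * canonicalG h L g (t, x t, vel x t) i +
            2 * canonicalH h (t, x t, vel x t) i) = 0) := by
  intro t
  have ht := hne t
  set p : J1 n := (t, x t, vel x t) with hp
  have hinv : (g p)⁻¹ * g p = 1 := Matrix.nonsing_inv_mul _ (gunit p)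
  have hinv' : g p * (g p)⁻¹ = 1 := Matrix.mul_nonsing_inv _ (gunit p)
  have sum1 : ∀ (i : Fin n) (v : Fin n → ℝ),
      (∑ k, (g p)⁻¹ i k * ∑ j, g p k j * v j) = v i := by
    intro i v
    have h1 : (∑ k, (g p)⁻¹ i k * ∑ j, g p k j * v j)
        = ∑ j, ((g p)⁻¹ * g p) i j * v j := by
      simp only [Matrix.mul_apply, Finset.sum_mul, Finset.mul_sum]
      rw [Finset.sum_comm]
      exact Finset.sum_congr rfl fun j _ => Finset.sum_congr rfl fun k _ => by ring
    rw [h1, hinv]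
    simp [Matrix.one_apply]
  have sum2 : ∀ (j : Fin n) (v : Fin n → ℝ),
      (∑ i, g p j i * ∑ k, (g p)⁻¹ i k * v k) = v j := by
    intro j v
    have h1 : (∑ i, g p j i * ∑ k, (g p)⁻¹ i k * v k)
        = ∑ k, (g p * (g p)⁻¹) j k * v k := by
      simp only [Matrix.mul_apply, Finset.sum_mul, Finset.mul_sum]
      rw [Finset.sum_comm]
      exact Finset.sum_congr rfl fun k _ => Finset.sum_congr rfl fun i _ => by ring
    rw [h1, hinv']
    simp [Matrix.one_apply]
  have key : ∀ i : Fin n,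
      (1 / h t) * (acc x t i + 2 * canonicalG h L g p i + 2 * canonicalH h p i)
        = (1 / 2) * ∑ k, (g p)⁻¹ i k * eulerLagrange h L g x t k := by
    intro i
    have e1 : (∑ k, (g p)⁻¹ i k * ∑ l, g p k l * p.2.2 l) = p.2.2 i := sum1 i _
    have e2 : (∑ k, (g p)⁻¹ i k * ∑ j, g p k j * acc x t j) = acc x t i := sum1 i _
    have e3 : (∑ k, (g p)⁻¹ i k * eulerLagrange h L g x t k)
        = 2 * (1 / h t) * acc x t i + ∑ k, (g p)⁻¹ i k * Aterm h L p k := by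
      rw [← e2, Finset.mul_sum, ← Finset.sum_add_distrib]
      refine Finset.sum_congr rfl fun k _ => ?_
      rw [eulerLagrange_eq, ← hp]
      ring
    have hy : p.2.2 i = vel x t i := rfl
    rw [e3, canonicalG_eq]
    simp only [canonicalH]
    rw [show (∑ k : Fin n, (g p)⁻¹ i k * ∑ l : Fin n, g p k l * vel x t l)
          = vel x t i from e1]
    rw [hy, show p.1 = t from rfl]
    field_simp
    ring
  constructor
  · intro hEL i
    rw [key i]
    simp [hEL]
  · intro hH j
    have h2 : ∀ i, (∑ k, (g p)⁻¹ i k * eulerLagrange h L g x t k) = 0 := by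
      intro i
      have hk := key i
      rw [hH i] at hk
      linarith [hk]
    calc eulerLagrange h L g x t j
        = ∑ i, g p j i * ∑ k, (g p)⁻¹ i k * eulerLagrange h L g x t k :=
          (sum2 j _).symm
      _ = 0 := by simp [h2]

end Jet
end
end
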